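/- arXiv:1706.09765 — 2 statements merged into one kernel-verified Lean document; each statement's English description precedes it below -/
import Mathlib

section
/- Every Arf numerical semigroup is acute. -/
structure NumericalSemigroup where
  carrier : Set ℕ
  zero_mem : 0 ∈ carrier
  add_mem : ∀ {a b : ℕ}, a ∈ carrier → b ∈ carrier → a + b ∈ carrier
  finite_compl : Set.Finite carrierᶜ

namespace NumericalSemigroup

/-- The genus: the number of gaps. -/
noncomputable def genus (Λ : NumericalSemigroup) : ℕ := Λ.carrierᶜ.ncard

/-- The conductor: the smallest `c` with `c + ℕ ⊆ Λ`. -/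
noncomputable def conductor (Λ : NumericalSemigroup) : ℕ := sInf {c : ℕ | ∀ n, c ≤ n → n ∈ Λ.carrier}

/-- `f` is the (unique) increasing enumeration of `Λ`. -/
noncomputable def IsEnum (Λ : NumericalSemigroup) (f : ℕ → ℕ) : Prop :=
  StrictMono f ∧ Set.range f = Λ.carrier

/-- The Arf property: `λ_i + λ_j - λ_k ∈ Λ` for all `i ≥ j ≥ k`. -/
noncomputable def IsArf (Λ : NumericalSemigroup) : Prop :=
  ∀ f : ℕ → ℕ, Λ.IsEnum f → ∀ i j k : ℕ, k ≤ j → j ≤ i → f i + f j - f k ∈ Λ.carrier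

end NumericalSemigroup

namespace NumericalSemigroup

/-- A numerical semigroup is ordinary if it is `{0} ∪ [c, ∞)` for some `c`. -/
noncomputable def IsOrdinary (Λ : NumericalSemigroup) : Prop :=
  ∃ c : ℕ, Λ.carrier = insert 0 (Set.Ici c)

/-- The dominant: the largest element of `Λ` smaller than the conductor. -/
noncomputable def dominant (Λ : NumericalSemigroup) : ℕ :=
  sSup {n : ℕ | n ∈ Λ.carrier ∧ n < Λ.conductor}

/-- The subconductor: the smallest element `m` of `Λ` with `[m, d] ⊆ Λ`. -/
noncomputable def subconductor (Λ : NumericalSemigroup) : ℕ :=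
  sInf {m : ℕ | m ∈ Λ.carrier ∧ Set.Icc m Λ.dominant ⊆ Λ.carrier}

/-- The subdominant: the largest element of `Λ` smaller than the subconductor. -/
noncomputable def subdominant (Λ : NumericalSemigroup) : ℕ :=
  sSup {n : ℕ | n ∈ Λ.carrier ∧ n < Λ.subconductor}

/-- Acute: ordinary, or `c - d ≤ c' - d'`. -/
noncomputable def IsAcute (Λ : NumericalSemigroup) : Prop :=
  Λ.IsOrdinary ∨ Λ.conductor - Λ.dominant ≤ Λ.subconductor - Λ.subdominant

end NumericalSemigroup

/-! The Arf property applied to `d ≥ c' > d'` puts `d + c' - d'` in `Λ`. This element exceeds the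
dominant `d`, so it is at least the conductor `c`, which is exactly `c - d ≤ c' - d'`. -/

namespace NumericalSemigroup

variable (Λ : NumericalSemigroup)

lemma infinite_carrier : Λ.carrier.Infinite := by
  simpa using Λ.finite_compl.infinite_compl

lemma isEnum_nth : Λ.IsEnum (Nat.nth (· ∈ Λ.carrier)) :=
  ⟨Nat.nth_strictMono Λ.infinite_carrier, Nat.range_nth_of_infinite Λ.infinite_carrier⟩

variable {Λ}

lemma IsArf.add_sub_mem (hArf : Λ.IsArf) {x y z : ℕ} (hx : x ∈ Λ.carrier) (hy : y ∈ Λ.carrier)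
    (hz : z ∈ Λ.carrier) (hzy : z ≤ y) (hyx : y ≤ x) : x + y - z ∈ Λ.carrier := by
  classical
  have h := hArf _ Λ.isEnum_nth (Nat.count (· ∈ Λ.carrier) x) (Nat.count (· ∈ Λ.carrier) y)
    (Nat.count (· ∈ Λ.carrier) z) (Nat.count_monotone _ hzy) (Nat.count_monotone _ hyx)
  rwa [Nat.nth_count hx, Nat.nth_count hy, Nat.nth_count hz] at h

lemma mem_of_conductor_le {n : ℕ} (hn : Λ.conductor ≤ n) : n ∈ Λ.carrier := by
  obtain ⟨b, hb⟩ := Λ.finite_compl.bddAbove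
  have hne : {c : ℕ | ∀ n, c ≤ n → n ∈ Λ.carrier}.Nonempty :=
    ⟨b + 1, fun n hn => by_contra fun h => absurd (hb h) (by omega)⟩
  exact Nat.sInf_mem hne n hn

lemma conductor_eq_zero_of_one_mem (h : 1 ∈ Λ.carrier) : Λ.conductor = 0 := by
  have hall : ∀ n, n ∈ Λ.carrier := by
    intro n
    induction n with
    | zero => exact Λ.zero_mem
    | succ k ih => exact Λ.add_mem ih h
  exact Nat.eq_zero_of_le_zero (Nat.sInf_le fun n _ => hall n)

lemma le_dominant {x : ℕ} (hx : x ∈ Λ.carrier) (hxc : x < Λ.conductor) : x ≤ Λ.dominant :=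
  le_csSup ⟨Λ.conductor, fun _ hy => hy.2.le⟩ ⟨hx, hxc⟩

lemma conductor_le_of_dominant_lt {x : ℕ} (hx : x ∈ Λ.carrier) (hdx : Λ.dominant < x) :
    Λ.conductor ≤ x :=
  not_lt.mp fun hxc => (le_dominant hx hxc).not_gt hdx

lemma isOrdinary_of_dominant_eq_zero (h : Λ.dominant = 0) : Λ.IsOrdinary := by
  refine ⟨Λ.conductor, Set.ext fun x => ⟨fun hx => ?_, ?_⟩⟩
  · rcases lt_or_ge x Λ.conductor with hxc | hxc
    · exact Or.inl (Nat.eq_zero_of_le_zero (h ▸ le_dominant hx hxc))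
    · exact Or.inr hxc
  · rintro (rfl | hx)
    · exact Λ.zero_mem
    · exact mem_of_conductor_le hx

section PositiveDominant

variable (hd : 0 < Λ.dominant)
include hd

lemma dominant_mem_and_lt_conductor : Λ.dominant ∈ Λ.carrier ∧ Λ.dominant < Λ.conductor := by
  have hne : {n | n ∈ Λ.carrier ∧ n < Λ.conductor}.Nonempty := by
    by_contra hempty
    rw [Set.not_nonempty_iff_eq_empty] at hempty
    exact hd.ne' (by rw [dominant, hempty, csSup_empty]; rfl)
  exact Nat.sSup_mem hne ⟨Λ.conductor, fun _ hy => hy.2.le⟩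

lemma dominant_mem_subconductor_set :
    Λ.dominant ∈ {m | m ∈ Λ.carrier ∧ Set.Icc m Λ.dominant ⊆ Λ.carrier} := by
  have h := (dominant_mem_and_lt_conductor hd).1
  exact ⟨h, fun _ hx => le_antisymm hx.2 hx.1 ▸ h⟩

lemma subconductor_mem_and_Icc_subset :
    Λ.subconductor ∈ Λ.carrier ∧ Set.Icc Λ.subconductor Λ.dominant ⊆ Λ.carrier :=
  Nat.sInf_mem ⟨_, dominant_mem_subconductor_set hd⟩

lemma subconductor_le_dominant : Λ.subconductor ≤ Λ.dominant :=
  Nat.sInf_le (dominant_mem_subconductor_set hd)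

lemma subconductor_pos : 0 < Λ.subconductor := by
  refine Nat.pos_of_ne_zero fun h0 => ?_
  have h1 : 1 ∈ Λ.carrier := (subconductor_mem_and_Icc_subset hd).2 ⟨by omega, hd⟩
  have := (dominant_mem_and_lt_conductor hd).2
  rw [conductor_eq_zero_of_one_mem h1] at this
  exact Nat.not_lt_zero _ this

lemma subdominant_mem_and_lt_subconductor :
    Λ.subdominant ∈ Λ.carrier ∧ Λ.subdominant < Λ.subconductor :=
  Nat.sSup_mem (s := {n | n ∈ Λ.carrier ∧ n < Λ.subconductor}) ⟨0, Λ.zero_mem, subconductor_pos hd⟩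
    ⟨Λ.subconductor, fun _ hy => hy.2.le⟩

end PositiveDominant

theorem IsArf.isAcute (hArf : Λ.IsArf) : Λ.IsAcute := by
  by_cases hord : Λ.IsOrdinary
  · exact Or.inl hord
  right
  have hd : 0 < Λ.dominant := Nat.pos_of_ne_zero (mt isOrdinary_of_dominant_eq_zero hord)
  obtain ⟨hd'Λ, hd'c'⟩ := subdominant_mem_and_lt_subconductor hd
  have hkey : Λ.dominant + Λ.subconductor - Λ.subdominant ∈ Λ.carrier :=
    hArf.add_sub_mem (dominant_mem_and_lt_conductor hd).1 (subconductor_mem_and_Icc_subset hd).1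
      hd'Λ hd'c'.le (subconductor_le_dominant hd)
  have hc := conductor_le_of_dominant_lt hkey (by omega)
  omega

end NumericalSemigroup

theorem stmt12 (Λ : NumericalSemigroup) (hArf : Λ.IsArf) :
    Λ.IsAcute :=
  hArf.isAcute
end

section
/- The trivial semigroup ℕ is the unique numerical semigroup whose ν sequence is 1, 2, 3, 4, 5, …, i.e., satisfies ν_i = i + 1 for all i. More generally, the ν sequence of a numerical semigroup is strictly increasing if and only if the semigroup is ℕ. -/
/-- `ν_i = #{j : λ_i - λ_j ∈ Λ}`, for `f` the enumeration of `Λ`. -/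
noncomputable def NumericalSemigroup.nu (Λ : NumericalSemigroup) (f : ℕ → ℕ) (i : ℕ) : ℕ :=
  {j : ℕ | j ≤ i ∧ f i - f j ∈ Λ.carrier}.ncard

/-!
Always `ν_i ≤ i + 1`, with equality exactly when `λ_i - λ_j ∈ Λ` for every `j ≤ i`; since `ν_0 = 1`,
a strictly increasing `ν` is forced to be `i + 1`. If `Λ ≠ ℕ` then `1 ∉ Λ`, yet beyond the conductor
`Λ` contains two consecutive elements `λ_j < λ_i`, and their difference `1` makes `ν_i < i + 1`.
-/

namespace NumericalSemigroup

variable (Λ : NumericalSemigroup)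

open Classical in
lemma nu_eq_card_filter (f : ℕ → ℕ) (i : ℕ) :
    Λ.nu f i = ((Finset.Iic i).filter fun j => f i - f j ∈ Λ.carrier).card := by
  rw [nu, ← Set.ncard_coe_finset, Finset.coe_filter]
  simp only [Finset.mem_Iic]

lemma nu_le (f : ℕ → ℕ) (i : ℕ) : Λ.nu f i ≤ i + 1 := by
  classical
  rw [nu_eq_card_filter, ← Nat.card_Iic]
  exact Finset.card_filter_le _ _

lemma nu_eq_succ_iff (f : ℕ → ℕ) (i : ℕ) :
    Λ.nu f i = i + 1 ↔ ∀ j ≤ i, f i - f j ∈ Λ.carrier := by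
  classical
  rw [nu_eq_card_filter, ← Nat.card_Iic, Finset.card_filter_eq_iff]
  simp only [Finset.mem_Iic]

lemma nu_zero (f : ℕ → ℕ) : Λ.nu f 0 = 1 :=
  (Λ.nu_eq_succ_iff f 0).2 fun j hj => by simpa [Nat.le_zero.1 hj] using Λ.zero_mem

lemma nu_eq_succ_of_strictMono {f : ℕ → ℕ} (h : StrictMono (Λ.nu f)) (i : ℕ) :
    Λ.nu f i = i + 1 :=
  (Λ.nu_le f i).antisymm <| by simpa [nu_zero] using h.add_le_nat i 0

lemma nu_eq_succ_of_carrier_eq_univ (h : Λ.carrier = Set.univ) (f : ℕ → ℕ) (i : ℕ) :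
    Λ.nu f i = i + 1 :=
  (Λ.nu_eq_succ_iff f i).2 fun _ _ => h ▸ Set.mem_univ _

lemma carrier_eq_univ_of_one_mem (h : 1 ∈ Λ.carrier) : Λ.carrier = Set.univ := by
  refine Set.eq_univ_of_forall fun n => ?_
  induction n with
  | zero => exact Λ.zero_mem
  | succ n ih => exact Λ.add_mem ih h

lemma exists_mem_and_succ_mem : ∃ n, n ∈ Λ.carrier ∧ n + 1 ∈ Λ.carrier := by
  obtain ⟨N, hN⟩ := Λ.finite_compl.bddAbove
  have mem_of_lt : ∀ n, N < n → n ∈ Λ.carrier := fun n hn =>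
    by_contra fun hn' => (hN hn').not_gt hn
  exact ⟨N + 1, mem_of_lt _ N.lt_succ_self, mem_of_lt _ (by omega)⟩

lemma carrier_eq_univ_of_nu_eq_succ {f : ℕ → ℕ} (hf : Λ.IsEnum f)
    (hν : ∀ i, Λ.nu f i = i + 1) : Λ.carrier = Set.univ := by
  obtain ⟨hmono, hrange⟩ := hf
  obtain ⟨n, hn, hn'⟩ := Λ.exists_mem_and_succ_mem
  rw [← hrange] at hn hn'
  obtain ⟨j, rfl⟩ := hn
  obtain ⟨i, hi⟩ := hn'
  have hji : j ≤ i := (hmono.lt_iff_lt.1 (by omega)).le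
  apply carrier_eq_univ_of_one_mem
  simpa [hi] using (Λ.nu_eq_succ_iff f i).1 (hν i) j hji

end NumericalSemigroup

theorem stmt17 (Λ : NumericalSemigroup) (f : ℕ → ℕ) (hf : Λ.IsEnum f) :
    ((∀ i : ℕ, Λ.nu f i = i + 1) ↔ Λ.carrier = Set.univ) ∧
    (StrictMono (Λ.nu f) ↔ Λ.carrier = Set.univ) := by
  have hν_iff : (∀ i, Λ.nu f i = i + 1) ↔ Λ.carrier = Set.univ :=
    ⟨Λ.carrier_eq_univ_of_nu_eq_succ hf, fun h => Λ.nu_eq_succ_of_carrier_eq_univ h f⟩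
  refine ⟨hν_iff, fun h => hν_iff.1 (Λ.nu_eq_succ_of_strictMono h), fun h => ?_⟩
  rw [show Λ.nu f = (· + 1) from funext (hν_iff.2 h)]
  exact strictMono_id.add_const 1
end
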